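/- Let f : ℝ^n → ℝ be L-smooth convex for some L > 0, and let (x, z) be a solution of the NAG ODE with parameter r = 2 and initial point x₀. Assume p⋆ ∈ dom f*. Define q(t) := −(8/t²)(x(t) − x₀) for t > 0. Then for all t > 0, ‖q(t) − p⋆‖² ≤ 128·D_f(x₀, p⋆)/(9t²). -/

import Mathlib

open scoped InnerProductSpace
open Filter Topology
open Set

/-- Legendre–Fenchel conjugate of `f`, valued in `ℝ ∪ {∞}` (modeled in `EReal`). -/
noncomputable def fconj {n : ℕ} (f : EuclideanSpace ℝ (Fin n) → ℝ)
    (p : EuclideanSpace ℝ (Fin n)) : EReal :=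
  ⨆ x : EuclideanSpace ℝ (Fin n), ((⟪p, x⟫_ℝ - f x : ℝ) : EReal)

/-- Effective domain `dom f*` of the Legendre–Fenchel conjugate. -/
noncomputable def fconjDom {n : ℕ} (f : EuclideanSpace ℝ (Fin n) → ℝ) :
    Set (EuclideanSpace ℝ (Fin n)) := {p | fconj f p < ⊤}

/-- Dual divergence `D_f(x, p) = f x + f*(p) − ⟨p, x⟩` (meaningful for `p ∈ dom f*`). -/
noncomputable def dualDiv {n : ℕ} (f : EuclideanSpace ℝ (Fin n) → ℝ)
    (x p : EuclideanSpace ℝ (Fin n)) : ℝ :=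
  f x + (fconj f p).toReal - ⟪p, x⟫_ℝ

/-- `f` is `L`-smooth convex: convex, differentiable, with `L`-Lipschitz gradient. -/
def LSmoothConvex {n : ℕ} (L : ℝ) (f : EuclideanSpace ℝ (Fin n) → ℝ) : Prop :=
  ConvexOn ℝ Set.univ f ∧ Differentiable ℝ f ∧
    LipschitzWith (Real.toNNReal L) (fun x => gradient f x)



lemma conv_grad_ineq {n : ℕ} {f : EuclideanSpace ℝ (Fin n) → ℝ}
    (hc : ConvexOn ℝ Set.univ f) (hd : Differentiable ℝ f)
    (a b : EuclideanSpace ℝ (Fin n)) :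
    f a + ⟪gradient f a, b - a⟫_ℝ ≤ f b := by
  have hline : HasDerivAt (fun s : ℝ => a + s • (b - a)) (b - a) 0 := by
    simpa using ((hasDerivAt_id (0:ℝ)).smul_const (b - a)).const_add a
  have hcomp : HasDerivAt (fun s : ℝ => f (a + s • (b - a)))
      (fderiv ℝ f a (b - a)) 0 := by
    have h := (hd (a + (0:ℝ) • (b - a))).hasFDerivAt.comp_hasDerivAt 0 hline
    simp only [zero_smul, add_zero] at h
    exact h
  have hφc : ConvexOn ℝ Set.univ (fun s : ℝ => f (a + s • (b - a))) := by
    have h := hc.comp_affineMap (AffineMap.lineMap a b : ℝ →ᵃ[ℝ] EuclideanSpace ℝ (Fin n))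
    have he : (fun s : ℝ => f (a + s • (b - a))) =
        f ∘ (AffineMap.lineMap a b : ℝ →ᵃ[ℝ] EuclideanSpace ℝ (Fin n)) := by
      funext s
      simp only [Function.comp_apply, AffineMap.lineMap_apply_module]
      congr 1
      module
    rw [he]
    simpa using h
  have hs := hφc.le_slope_of_hasDerivAt (Set.mem_univ (0:ℝ)) (Set.mem_univ (1:ℝ))
    one_pos hcomp
  have hgrad : ⟪gradient f a, b - a⟫_ℝ = fderiv ℝ f a (b - a) := by
    simp [gradient, InnerProductSpace.toDual_symm_apply]
  rw [slope_def_field] at hs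
  simp only [zero_smul, add_zero, one_smul, add_sub_cancel, div_one, sub_zero] at hs
  rw [hgrad]
  linarith [hs]


lemma fconj_ne_bot {n : ℕ} (f : EuclideanSpace ℝ (Fin n) → ℝ) (p : EuclideanSpace ℝ (Fin n)) :
    fconj f p ≠ ⊥ := by
  intro h
  have h1 : ((⟪p, 0⟫_ℝ - f 0 : ℝ) : EReal) ≤ fconj f p := by
    rw [fconj]; exact le_iSup (fun x : EuclideanSpace ℝ (Fin n) => ((⟪p, x⟫_ℝ - f x : ℝ) : EReal)) 0
  rw [h] at h1
  exact (EReal.coe_ne_bot _) (le_bot_iff.1 h1)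

lemma fconj_fenchel {n : ℕ} {f : EuclideanSpace ℝ (Fin n) → ℝ} {p : EuclideanSpace ℝ (Fin n)}
    (hp : p ∈ fconjDom f) (y : EuclideanSpace ℝ (Fin n)) :
    ⟪p, y⟫_ℝ - f y ≤ (fconj f p).toReal := by
  have h1 : ((⟪p, y⟫_ℝ - f y : ℝ) : EReal) ≤ fconj f p := by
    rw [fconj]; exact le_iSup (fun x : EuclideanSpace ℝ (Fin n) => ((⟪p, x⟫_ℝ - f x : ℝ) : EReal)) y
  have h2 : fconj f p = ((fconj f p).toReal : EReal) :=
    (EReal.coe_toReal (ne_of_lt hp) (fconj_ne_bot f p)).symm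
  rw [h2] at h1
  exact_mod_cast h1

lemma fconj_le_of_forall {n : ℕ} {f : EuclideanSpace ℝ (Fin n) → ℝ}
    {p : EuclideanSpace ℝ (Fin n)} {M : ℝ}
    (h : ∀ y, ⟪p, y⟫_ℝ - f y ≤ M) : fconj f p ≤ (M : EReal) :=
  iSup_le fun y => EReal.coe_le_coe_iff.2 (h y)

lemma fconjDom_convex {n : ℕ} (f : EuclideanSpace ℝ (Fin n) → ℝ) :
    Convex ℝ (fconjDom f) := by
  intro p hp q hq a b ha hb hab
  have hM : ∀ y, ⟪a • p + b • q, y⟫_ℝ - f y ≤ a * (fconj f p).toReal + b * (fconj f q).toReal := by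
    intro y
    have h1 := fconj_fenchel hp y
    have h2 := fconj_fenchel hq y
    have e : ⟪a • p + b • q, y⟫_ℝ - f y
        = a * (⟪p, y⟫_ℝ - f y) + b * (⟪q, y⟫_ℝ - f y) := by
      rw [inner_add_left, real_inner_smul_left, real_inner_smul_left]
      linear_combination (f y) * hab
    rw [e]
    have := mul_le_mul_of_nonneg_left h1 ha
    have := mul_le_mul_of_nonneg_left h2 hb
    linarith
  exact lt_of_le_of_lt (fconj_le_of_forall hM) (EReal.coe_lt_top _)

lemma proj_ineq {n : ℕ} {f : EuclideanSpace ℝ (Fin n) → ℝ} {pstar : EuclideanSpace ℝ (Fin n)}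
    (hps : pstar ∈ closure (fconjDom f))
    (hmin : ∀ q ∈ closure (fconjDom f), ‖pstar‖ ≤ ‖q‖)
    {p : EuclideanSpace ℝ (Fin n)} (hp : p ∈ fconjDom f) :
    0 ≤ ⟪p - pstar, pstar⟫_ℝ := by
  have hcl : Convex ℝ (closure (fconjDom f)) := (fconjDom_convex f).closure
  have hpc : p ∈ closure (fconjDom f) := subset_closure hp
  set I := ⟪pstar, p - pstar⟫_ℝ with hI
  set N := ‖p - pstar‖ ^ 2 with hN
  have key : ∀ s : ℝ, 0 < s → s ≤ 1 → 0 ≤ 2 * s * I + s ^ 2 * N := by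
    intro s hs hs1
    have hmem : pstar + s • (p - pstar) ∈ closure (fconjDom f) := by
      have := hcl hps hpc (by linarith : (0:ℝ) ≤ 1 - s) (le_of_lt hs) (by ring)
      convert this using 1
      module
    have h := hmin _ hmem
    have h2 : ‖pstar‖ ^ 2 ≤ ‖pstar‖ ^ 2 + 2 * (s * I) + s ^ 2 * N := by
      calc ‖pstar‖ ^ 2 ≤ ‖pstar + s • (p - pstar)‖ ^ 2 :=
            pow_le_pow_left₀ (norm_nonneg _) h 2
        _ = ‖pstar‖ ^ 2 + 2 * ⟪pstar, s • (p - pstar)⟫_ℝ + ‖s • (p - pstar)‖ ^ 2 :=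
            norm_add_sq_real _ _
        _ = ‖pstar‖ ^ 2 + 2 * (s * I) + s ^ 2 * N := by
            rw [real_inner_smul_right, norm_smul, mul_pow, Real.norm_eq_abs, sq_abs]
    linarith
  have hI0 : 0 ≤ I := by
    by_contra hneg
    push_neg at hneg
    have hN0 : 0 ≤ N := sq_nonneg _
    rcases eq_or_lt_of_le hN0 with hN0 | hNp
    · have := key 1 one_pos le_rfl
      nlinarith
    · set s := min 1 (-I / N) with hsdef
      have hs0 : 0 < s := lt_min one_pos (div_pos (neg_pos.2 hneg) hNp)
      have hs1 : s ≤ 1 := min_le_left _ _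
      have hsIN : s ≤ -I / N := min_le_right _ _
      have hk := key s hs0 hs1
      have hsN : s * N ≤ -I := by
        have h3 := mul_le_mul_of_nonneg_right hsIN (le_of_lt hNp)
        rwa [div_mul_cancel₀ _ (ne_of_gt hNp)] at h3
      nlinarith
  rw [real_inner_comm]
  exact hI0

lemma grad_mem_dom {n : ℕ} {f : EuclideanSpace ℝ (Fin n) → ℝ}
    (hc : ConvexOn ℝ Set.univ f) (hd : Differentiable ℝ f)
    (y : EuclideanSpace ℝ (Fin n)) : gradient f y ∈ fconjDom f := by
  have hM : ∀ x, ⟪gradient f y, x⟫_ℝ - f x ≤ ⟪gradient f y, y⟫_ℝ - f y := by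
    intro x
    have := conv_grad_ineq hc hd y x
    rw [inner_sub_right] at this
    linarith
  exact lt_of_le_of_lt (fconj_le_of_forall hM) (EReal.coe_lt_top _)

set_option maxHeartbeats 1000000 in
theorem stmt15' {n : ℕ} (L : ℝ) (hL : 0 < L)
    (f : EuclideanSpace ℝ (Fin n) → ℝ)
    (hconv : ConvexOn ℝ Set.univ f) (hdiff : Differentiable ℝ f)
    (x₀ : EuclideanSpace ℝ (Fin n))
    (x z x' z' : ℝ → EuclideanSpace ℝ (Fin n))
    (hx : ∀ t ∈ Set.Ici (0 : ℝ), HasDerivWithinAt x (x' t) (Set.Ici 0) t)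
    (hz : ∀ t ∈ Set.Ici (0 : ℝ), HasDerivWithinAt z (z' t) (Set.Ici 0) t)
    (hx0 : x 0 = x₀) (hz0 : z 0 = x₀)
    (hode1 : ∀ t > (0 : ℝ), x' t = ((2 : ℝ) / t) • (z t - x t))
    (hode2 : ∀ t > (0 : ℝ), z' t = -((t / 2) • gradient f (x t)))
    (pstar : EuclideanSpace ℝ (Fin n))
    (hps : pstar ∈ closure (fconjDom f))
    (hmin : ∀ q ∈ closure (fconjDom f), ‖pstar‖ ≤ ‖q‖)
    (hpd : pstar ∈ fconjDom f) :
    ∀ t > (0 : ℝ),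
      ‖-((8 / t ^ 2) • (x t - x₀)) - pstar‖ ^ 2 ≤
        128 * dualDiv f x₀ pstar / (9 * t ^ 2) := by
  -- abbreviations
  set g0 : ℝ := dualDiv f x₀ pstar with hg0def
  have hfen : ∀ y, 0 ≤ f y + (fconj f pstar).toReal - ⟪pstar, y⟫_ℝ := by
    intro y; have := fconj_fenchel hpd y; linarith
  have hg0nn : 0 ≤ g0 := hfen x₀
  set K : ℝ := f x₀ - ⟪pstar, x₀⟫_ℝ with hKdef
  set u : ℝ → EuclideanSpace ℝ (Fin n) := fun t => z t - x₀ + (t^2/4) • pstar with hudef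
  set u' : ℝ → EuclideanSpace ℝ (Fin n) := fun t => z' t + (t/2) • pstar with hu'def
  set F : ℝ → ℝ := fun t => t^2/4 * (f (x t) - ⟪pstar, x t⟫_ℝ - K)
      + (1/2) * ⟪u t, u t⟫_ℝ with hFdef
  set F' : ℝ → ℝ := fun t => t/2 * (f (x t) - ⟪pstar, x t⟫_ℝ - K)
      + t^2/4 * (⟪gradient f (x t), x' t⟫_ℝ - ⟪pstar, x' t⟫_ℝ)
      + (1/2) * (⟪u t, u' t⟫_ℝ + ⟪u' t, u t⟫_ℝ) with hF'def
  -- derivative of F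
  have hgradinner : ∀ t, ⟪gradient f (x t), x' t⟫_ℝ = fderiv ℝ f (x t) (x' t) := by
    intro t; simp [gradient, InnerProductSpace.toDual_symm_apply]
  have hq2 : ∀ t : ℝ, HasDerivAt (fun s : ℝ => s^2/4) (t/2) t := by
    intro t
    have h := (hasDerivAt_pow 2 t).div_const 4
    refine h.congr_deriv ?_
    norm_num; ring
  have hu'd : ∀ t ∈ Set.Ici (0:ℝ), HasDerivWithinAt u (u' t) (Set.Ici 0) t := by
    intro t ht
    exact ((hz t ht).sub_const x₀).add (((hq2 t).smul_const pstar).hasDerivWithinAt)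
  have hFder : ∀ t ∈ Set.Ici (0:ℝ), HasDerivWithinAt F (F' t) (Set.Ici 0) t := by
    intro t ht
    have hA : HasDerivWithinAt (fun s => f (x s)) (⟪gradient f (x t), x' t⟫_ℝ)
        (Set.Ici 0) t := by
      rw [hgradinner t]
      exact (hdiff (x t)).hasFDerivAt.comp_hasDerivWithinAt t (hx t ht)
    have hB : HasDerivWithinAt (fun s => ⟪pstar, x s⟫_ℝ) (⟪pstar, x' t⟫_ℝ)
        (Set.Ici 0) t := by
      have h := HasDerivWithinAt.inner ℝ (hasDerivWithinAt_const t (Set.Ici (0:ℝ)) pstar)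
        (hx t ht)
      simpa using h
    have hψ : HasDerivWithinAt (fun s => f (x s) - ⟪pstar, x s⟫_ℝ - K)
        (⟪gradient f (x t), x' t⟫_ℝ - ⟪pstar, x' t⟫_ℝ) (Set.Ici 0) t :=
      (hA.sub hB).sub_const K
    have hI : HasDerivWithinAt (fun s => ⟪u s, u s⟫_ℝ)
        (⟪u t, u' t⟫_ℝ + ⟪u' t, u t⟫_ℝ) (Set.Ici 0) t :=
      HasDerivWithinAt.inner ℝ (hu'd t ht) (hu'd t ht)
    have h1 := ((hq2 t).hasDerivWithinAt.mul hψ).add (hI.const_mul (1/2))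
    exact h1
  have hFcont : ContinuousOn F (Set.Ici 0) := fun t ht => (hFder t ht).continuousWithinAt
  -- convexity and projection inequalities
  have hkey : ∀ t ∈ Set.Ioi (0:ℝ), F' t ≤ 0 := by
    intro t ht
    have ht' : (0:ℝ) < t := ht
    have hcv := conv_grad_ineq hconv hdiff (x t) x₀
    have hpj := proj_ineq hps hmin (grad_mem_dom hconv hdiff (x t))
    have hid : F' t = (t/2) * (f (x t) - f x₀ + ⟪gradient f (x t), x₀ - x t⟫_ℝ)
        - (t^3/8) * ⟪gradient f (x t) - pstar, pstar⟫_ℝ := by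
      rw [hF'def]
      simp only [hode1 t ht', hode2 t ht', hudef, hu'def, hKdef,
        inner_add_left, inner_add_right, inner_sub_left, inner_sub_right,
        real_inner_smul_left, real_inner_smul_right, inner_neg_left, inner_neg_right]
      rw [real_inner_comm (z t) pstar, real_inner_comm (x t) pstar,
        real_inner_comm x₀ pstar, real_inner_comm (z t) (gradient f (x t)),
        real_inner_comm x₀ (gradient f (x t)), real_inner_comm pstar (gradient f (x t))]
      field_simp
      ring
    rw [hid]
    have ha : (t/2) * (f (x t) - f x₀ + ⟪gradient f (x t), x₀ - x t⟫_ℝ) ≤ 0 :=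
      mul_nonpos_of_nonneg_of_nonpos (by linarith) (by linarith)
    have hb : 0 ≤ (t^3/8) * ⟪gradient f (x t) - pstar, pstar⟫_ℝ :=
      mul_nonneg (by positivity) hpj
    linarith
  -- F ≤ 0 on Ici 0
  have hF0 : F 0 = 0 := by
    simp [hFdef, hudef, hx0, hz0]
  have hFle : ∀ t ∈ Set.Ici (0:ℝ), F t ≤ 0 := by
    have hanti : AntitoneOn F (Set.Ici 0) := by
      apply antitoneOn_of_deriv_nonpos (convex_Ici 0) hFcont
      · intro t ht
        rw [interior_Ici] at ht
        exact ((hFder t (Set.Ioi_subset_Ici_self ht)).hasDerivAt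
          (Ici_mem_nhds ht)).differentiableAt.differentiableWithinAt
      · intro t ht
        rw [interior_Ici] at ht
        rw [((hFder t (Set.Ioi_subset_Ici_self ht)).hasDerivAt (Ici_mem_nhds ht)).deriv]
        exact hkey t ht
    intro t ht
    have := hanti (Set.self_mem_Ici) ht ht
    rw [hF0] at this
    exact this
  -- bound on u
  set c : ℝ := Real.sqrt (g0/2) with hcdef
  have hc2 : c^2 = g0/2 := Real.sq_sqrt (by linarith)
  have hcnn : 0 ≤ c := Real.sqrt_nonneg _
  have hub : ∀ t ∈ Set.Ici (0:ℝ), ‖u t‖ ≤ c * t := by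
    intro t ht
    have hg0e : g0 = K + (fconj f pstar).toReal := by
      rw [hg0def, dualDiv, hKdef]; ring
    have hT : -g0 ≤ f (x t) - ⟪pstar, x t⟫_ℝ - K := by
      have := hfen (x t); linarith
    have h1 : t^2/4 * (f (x t) - ⟪pstar, x t⟫_ℝ - K) + (1/2) * ⟪u t, u t⟫_ℝ ≤ 0 :=
      hFle t ht
    have hmul : t^2/4 * (-g0) ≤ t^2/4 * (f (x t) - ⟪pstar, x t⟫_ℝ - K) :=
      mul_le_mul_of_nonneg_left hT (by positivity)
    have h3 : ⟪u t, u t⟫_ℝ ≤ t^2/2 * g0 := by linarith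
    have h4 : ‖u t‖^2 ≤ (c*t)^2 := by
      rw [real_inner_self_eq_norm_sq] at h3
      have e : (c*t)^2 = t^2/2 * g0 := by rw [mul_pow, hc2]; ring
      rw [e]
      exact h3
    calc ‖u t‖ = Real.sqrt (‖u t‖^2) := (Real.sqrt_sq (norm_nonneg _)).symm
      _ ≤ Real.sqrt ((c*t)^2) := Real.sqrt_le_sqrt h4
      _ = c * t := Real.sqrt_sq (mul_nonneg hcnn ht)
  -- W and its derivative
  set W : ℝ → EuclideanSpace ℝ (Fin n) := fun t => t^2 • (x t - x₀) + (t^4/8) • pstar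
    with hWdef
  have hW : ∀ s ∈ Set.Ici (0:ℝ), HasDerivWithinAt W
      ((2*s) • (x s - x₀) + s^2 • x' s + (s^3/2) • pstar) (Set.Ici 0) s := by
    intro s hs
    have h1 : HasDerivAt (fun r : ℝ => r^2) (2*s) s := by
      have h := hasDerivAt_pow 2 s
      refine h.congr_deriv ?_
      norm_num
    have h2 : HasDerivWithinAt (fun r : ℝ => r^2 • (x r - x₀))
        ((2*s) • (x s - x₀) + s^2 • x' s) (Set.Ici 0) s := by
      have := HasDerivWithinAt.smul h1.hasDerivWithinAt ((hx s hs).sub_const x₀)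
      refine this.congr_deriv ?_
      module
    have h3 : HasDerivAt (fun r : ℝ => (r^4/8) • pstar) ((s^3/2) • pstar) s := by
      have h := ((hasDerivAt_pow 4 s).div_const 8).smul_const pstar
      refine h.congr_deriv ?_
      congr 1
      norm_num; ring
    have := h2.add h3.hasDerivWithinAt
    exact this
  have hWODE : ∀ s ∈ Set.Ici (0:ℝ),
      (2*s) • (x s - x₀) + s^2 • x' s + (s^3/2) • pstar = (2*s) • u s := by
    intro s hs
    rcases eq_or_lt_of_le (show (0:ℝ) ≤ s from hs) with h0 | h0
    · simp [← h0, hudef]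
    · rw [hode1 s h0, hudef]
      rw [smul_smul]
      have e : s^2 * (2/s) = 2*s := by field_simp
      rw [e]
      module
  -- apply the fencing theorem
  intro t ht
  have hWb : ‖W t‖ ≤ 2*c/3 * t^3 := by
    have hB : ∀ s : ℝ, HasDerivAt (fun r => 2*c/3 * r^3) (2*c*s^2) s := by
      intro s
      have h := (hasDerivAt_pow 3 s).const_mul (2*c/3)
      refine h.congr_deriv ?_
      norm_num; ring
    have hcont : ContinuousOn W (Set.Icc 0 t) := fun s hs =>
      ((hW s hs.1).continuousWithinAt).mono Set.Icc_subset_Ici_self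
    have hder : ∀ s ∈ Set.Ico (0:ℝ) t, HasDerivWithinAt W ((2*s) • u s) (Set.Ici s) s := by
      intro s hs
      have := (hW s hs.1).mono (Set.Ici_subset_Ici.2 hs.1)
      rwa [hWODE s hs.1] at this
    have hbound : ∀ s ∈ Set.Ico (0:ℝ) t, ‖(2*s) • u s‖ ≤ 2*c*s^2 := by
      intro s hs
      rw [norm_smul, Real.norm_eq_abs, abs_of_nonneg (by linarith [hs.1] : (0:ℝ) ≤ 2*s)]
      calc (2*s) * ‖u s‖ ≤ (2*s) * (c*s) :=
            mul_le_mul_of_nonneg_left (hub s hs.1) (by linarith [hs.1])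
        _ = 2*c*s^2 := by ring
    have hW0 : ‖W 0‖ ≤ 2*c/3 * 0^3 := by
      simp [hWdef, hx0]
    have := image_norm_le_of_norm_deriv_right_le_deriv_boundary hcont hder hW0 hB hbound
      (Set.right_mem_Icc.2 (le_of_lt ht))
    exact this
  -- final computation
  have htne : t ≠ 0 := ne_of_gt ht
  have hvec : -((8 / t ^ 2) • (x t - x₀)) - pstar = -((8/t^4) • W t) := by
    rw [hWdef]
    match_scalars
    all_goals field_simp
    all_goals ring
  rw [hvec]
  have hnorm : ‖-((8/t^4) • W t)‖ = (8/t^4) * ‖W t‖ := by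
    rw [norm_neg, norm_smul, Real.norm_eq_abs, abs_of_pos (by positivity)]
  have hle : ‖-((8/t^4) • W t)‖ ≤ 16*c/(3*t) := by
    rw [hnorm]
    calc (8/t^4) * ‖W t‖ ≤ (8/t^4) * (2*c/3 * t^3) :=
          mul_le_mul_of_nonneg_left hWb (by positivity)
      _ = 16*c/(3*t) := by field_simp; ring
  have hsq := pow_le_pow_left₀ (norm_nonneg _) hle 2
  calc ‖-((8/t^4) • W t)‖^2 ≤ (16*c/(3*t))^2 := hsq
    _ = 128 * g0 / (9*t^2) := by
        rw [div_pow, mul_pow, mul_pow, hc2]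
        field_simp
        ring

/-- for a solution `(x, z)` of the NAG ODE with `r = 2`, with
`q(t) := −(8/t²)(x(t) − x₀)`, if `p⋆ ∈ dom f*` then for all `t > 0`:
`‖q(t) − p⋆‖² ≤ 128 D_f(x₀,p⋆)/(9t²)`. -/
theorem stmt15 {n : ℕ} (hn : 1 ≤ n) (L : ℝ) (hL : 0 < L)
    (f : EuclideanSpace ℝ (Fin n) → ℝ) (hf : LSmoothConvex L f)
    (x₀ : EuclideanSpace ℝ (Fin n))
    (x z x' z' : ℝ → EuclideanSpace ℝ (Fin n))
    (hx : ∀ t ∈ Set.Ici (0 : ℝ), HasDerivWithinAt x (x' t) (Set.Ici 0) t)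
    (hx' : ContinuousOn x' (Set.Ici 0))
    (hz : ∀ t ∈ Set.Ici (0 : ℝ), HasDerivWithinAt z (z' t) (Set.Ici 0) t)
    (hz' : ContinuousOn z' (Set.Ici 0))
    (hx0 : x 0 = x₀) (hz0 : z 0 = x₀)
    (hode1 : ∀ t > (0 : ℝ), x' t = ((2 : ℝ) / t) • (z t - x t))
    (hode2 : ∀ t > (0 : ℝ), z' t = -((t / 2) • gradient f (x t)))
    (pstar : EuclideanSpace ℝ (Fin n))
    (hps : pstar ∈ closure (fconjDom f))
    (hmin : ∀ q ∈ closure (fconjDom f), ‖pstar‖ ≤ ‖q‖)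
    (hpd : pstar ∈ fconjDom f) :
    ∀ t > (0 : ℝ),
      ‖-((8 / t ^ 2) • (x t - x₀)) - pstar‖ ^ 2 ≤
        128 * dualDiv f x₀ pstar / (9 * t ^ 2) := by
  obtain ⟨hconv, hdiff, -⟩ := hf
  exact stmt15' L hL f hconv hdiff x₀ x z x' z' hx hz hx0 hz0 hode1 hode2 pstar hps hmin hpd
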